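/- Let N ≥ 2 be an integer and 1 < p ≤ 3/2. If k ∈ [-(N-1)/(p-1), 0), then E_{p,N,k}[cos](θ) ≤ 0 for every θ ∈ (0, π/2); that is, the quasiradial function u = r^k·cos(θ) is p-superharmonic in the upper half-space ℝ^N₊. -/

import Mathlib

/-!
Since `cos'' = -cos` and `cot = cos / sin`, the expression `E_{p,N,k}[cos]` factors as
`cos θ · (A sin² θ + B cos² θ)` with `A = (2p-3)k² + (N-p)k - (p-1) - (N-2)` and
`B = k² ((p-1)k + N - 1)(k - 1)`. For `p ≤ 3/2` and `k < 0` every term of `A` is nonpositive,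
and `k ≥ -(N-1)/(p-1)` is exactly the condition that `(p-1)k + N - 1 ≥ 0`, which makes `B ≤ 0`.
-/

noncomputable section
open Real Set

/-- The differential expression `E_{p,N,k}[f](θ)` whose sign coincides with the sign of the
`p`-Laplacian of the quasiradial function `u(r,θ) = r^k · f(θ)` in the upper half-space. -/
def Ecal (p : ℝ) (N : ℕ) (k : ℝ) (f : ℝ → ℝ) (θ : ℝ) : ℝ :=
  ((p - 1) * (deriv f θ) ^ 2 + k ^ 2 * (f θ) ^ 2) * deriv (deriv f) θ
    + k * ((2 * p - 3) * k + (N : ℝ) - p) * f θ * (deriv f θ) ^ 2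
    + k ^ 3 * (k * (p - 1) + (N : ℝ) - p) * (f θ) ^ 3
    + ((N : ℝ) - 2) * ((deriv f θ) ^ 2 + k ^ 2 * (f θ) ^ 2) * deriv f θ * Real.cot θ

theorem Ecal_cos_eq (p : ℝ) (N : ℕ) (k : ℝ) {θ : ℝ} (hθ : sin θ ≠ 0) :
    Ecal p N k cos θ = cos θ *
      (((2 * p - 3) * k ^ 2 + ((N : ℝ) - p) * k - (p - 1) - ((N : ℝ) - 2)) * sin θ ^ 2
        + k ^ 2 * ((p - 1) * k + ((N : ℝ) - 1)) * (k - 1) * cos θ ^ 2) := by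
  have hcos'' : deriv (deriv cos) θ = -cos θ := by simp [Real.deriv_cos']
  rw [Ecal, hcos'', Real.deriv_cos', cot_eq_cos_div_sin]
  field_simp
  ring

theorem Ecal_cos_sin_sq_coeff_nonpos {p N k : ℝ} (hp1 : 1 ≤ p) (hp2 : p ≤ 3 / 2) (hN : 2 ≤ N)
    (hk : k ≤ 0) :
    (2 * p - 3) * k ^ 2 + (N - p) * k - (p - 1) - (N - 2) ≤ 0 := by
  have hquad : (2 * p - 3) * k ^ 2 ≤ 0 :=
    mul_nonpos_of_nonpos_of_nonneg (by linarith) (sq_nonneg k)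
  have hlin : (N - p) * k ≤ 0 := mul_nonpos_of_nonneg_of_nonpos (by linarith) hk
  linarith

theorem Ecal_cos_cos_sq_coeff_nonpos {p N k : ℝ} (hk : k ≤ 1) (hpos : 0 ≤ (p - 1) * k + (N - 1)) :
    k ^ 2 * ((p - 1) * k + (N - 1)) * (k - 1) ≤ 0 :=
  mul_nonpos_of_nonneg_of_nonpos (mul_nonneg (sq_nonneg k) hpos) (by linarith)

/-- For `1 < p ≤ 3/2` and `k ∈ [-(N-1)/(p-1), 0)`, `u = r^k cos θ` is `p`-superharmonic:
`E_{p,N,k}[cos] ≤ 0` on `(0, π/2)`. -/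
theorem Ecal_cos_nonpos_of_small_p (N : ℕ) (hN : 2 ≤ N) (p : ℝ) (hp1 : 1 < p)
    (hp2 : p ≤ 3 / 2) (k : ℝ) (hk : k ∈ Ico (-(((N : ℝ) - 1) / (p - 1))) 0) :
    ∀ θ ∈ Ioo (0 : ℝ) (π / 2), Ecal p N k Real.cos θ ≤ 0 := by
  intro θ hθ
  have hsin : 0 < sin θ := sin_pos_of_pos_of_lt_pi hθ.1 (by linarith [hθ.2, pi_pos])
  have hcos : 0 < cos θ := cos_pos_of_mem_Ioo ⟨by linarith [hθ.1, pi_pos], hθ.2⟩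
  have hN2 : (2 : ℝ) ≤ N := by exact_mod_cast hN
  have hpos : 0 ≤ (p - 1) * k + ((N : ℝ) - 1) := by
    have := (le_div_iff₀ (sub_pos.2 hp1)).1 (neg_le.1 hk.1)
    linarith
  rw [Ecal_cos_eq p N k hsin.ne']
  refine mul_nonpos_of_nonneg_of_nonpos hcos.le (add_nonpos ?_ ?_)
  · exact mul_nonpos_of_nonpos_of_nonneg
      (Ecal_cos_sin_sq_coeff_nonpos hp1.le hp2 hN2 hk.2.le) (sq_nonneg _)
  · exact mul_nonpos_of_nonpos_of_nonneg
      (Ecal_cos_cos_sq_coeff_nonpos (by linarith [hk.2]) hpos) (sq_nonneg _)
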